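/- arXiv:1802.06098 — 2 statements merged into one kernel-verified Lean document; each statement's English description precedes it below -/
import Mathlib

section
/- Let (X,r) be a finite colored space with |X| = n ≥ 5, a_2(r) < n(n−1)/2, and m_2(r) = 0 (i.e., every color class is a matching). Then there exists a fusion r_1 of r such that 1 ≤ a_2(r) − a_2(r_1) ≤ 2 and a_2(r) − a_2(r_1) ≤ a_3(r) − a_3(r_1). -/
/-- The set of colors of the colored space `(X, r)`: values `r x y` for distinct `x, y`. -/
def colorIm {X C : Type*} (r : X → X → C) : Set C :=
  {α | ∃ x y : X, x ≠ y ∧ r x y = α}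

/-- `a₂(r)`: the number of colors. -/
noncomputable def a2 {X C : Type*} (r : X → X → C) : ℕ := (colorIm r).ncard

/-- `A₃(r)`: the set of multisets of colors of triangles on 3-subsets of `X`. -/
def A3 {X C : Type*} (r : X → X → C) : Set (Multiset C) :=
  {m | ∃ x y z : X, x ≠ y ∧ y ≠ z ∧ x ≠ z ∧ m = {r x y, r y z, r x z}}

/-- `a₃(r)`: the number of isometry classes of 3-subsets. -/
noncomputable def a3 {X C : Type*} (r : X → X → C) : ℕ := (A3 r).ncard

/-- `M_k(r)`: colors `α` such that the graph `(X, E_α)` has a vertex of degree at least `k`. -/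
def Mdeg {X C : Type*} (r : X → X → C) (k : ℕ) : Set C :=
  {α | ∃ x : X, k ≤ {y | y ≠ x ∧ r x y = α}.ncard}

/-- A nonempty set `Γ` of colors is closed if `α, β ∈ Γ` and `αβγ ∈ A₃(r)` imply `γ ∈ Γ`. -/
def IsClosedColors {X C : Type*} (r : X → X → C) (Γ : Set C) : Prop :=
  ∀ α β γ : C, α ∈ Γ → β ∈ Γ → ({α, β, γ} : Multiset C) ∈ A3 r → γ ∈ Γ

/-- The union of the color classes `E_α`, `α ∈ S`, is a matching (max degree ≤ 1). -/
def IsMatchingOn {X C : Type*} (r : X → X → C) (S : Set C) : Prop :=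
  ∀ x y z : X, y ≠ x → z ≠ x → r x y ∈ S → r x z ∈ S → y = z

/-- `r₁` is a fusion of `r`: the color partition of `r` refines that of `r₁`. -/
def IsFusion {X C D : Type*} (r : X → X → C) (r₁ : X → X → D) : Prop :=
  ∀ x y u v : X, x ≠ y → u ≠ v → r x y = r u v → r₁ x y = r₁ u v

/-- The connected component of `x₀` in the graph on `X` whose edges are the pairs
colored by an element of `S`. -/
def compOf {X C : Type*} (r : X → X → C) (S : Set C) (x₀ : X) : Set X :=
  {y | Relation.ReflTransGen (fun a b => a ≠ b ∧ r a b ∈ S) x₀ y}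

/-- `A₃` of the subspace induced on `W ⊆ X`. -/
def A3on {X C : Type*} (r : X → X → C) (W : Set X) : Set (Multiset C) :=
  {m | ∃ x ∈ W, ∃ y ∈ W, ∃ z ∈ W, x ≠ y ∧ y ≠ z ∧ x ≠ z ∧ m = {r x y, r y z, r x z}}

/-!
Since `a₂(r)` is smaller than the number of pairs, two distinct pairs `{x, y}` and `{u, v}` share a
color; they are disjoint because every color class is a matching, i.e. the colors at a common
vertex are distinct. If `r x u ≠ r y v`, recoloring the class of `yv` with the color of `xu`
removes one color and makes the triangles `yvu` and `uxy` isometric. Otherwise take a fifth point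
`w` and recolor `wv ↦ wx`, `wu ↦ wy`: this removes two colors and identifies `wvu` with `wxy` and
`wvy` with `wxu`. In both cases the identified triangle types were distinct, so `a₃` drops at least
as much as `a₂`.
-/

section Coloring

variable {X C : Type*} (r : X → X → C)

lemma colorIm_finite [Finite X] : (colorIm r).Finite :=
  (Set.finite_range fun p : X × X => r p.1 p.2).subset fun _ ⟨x, y, _, h⟩ => ⟨(x, y), h⟩

lemma A3_finite [Finite X] : (A3 r).Finite :=
  (Set.finite_range fun p : X × X × X =>
    ({r p.1 p.2.1, r p.2.1 p.2.2, r p.1 p.2.2} : Multiset C)).subset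
    fun _ ⟨x, y, z, _, _, _, h⟩ => ⟨(x, y, z), h.symm⟩

lemma colorIm_comp {D : Type*} (g : C → D) :
    colorIm (fun x y => g (r x y)) = g '' colorIm r := by
  ext α
  constructor
  · rintro ⟨x, y, hxy, rfl⟩
    exact ⟨r x y, ⟨x, y, hxy, rfl⟩, rfl⟩
  · rintro ⟨_, ⟨x, y, hxy, rfl⟩, rfl⟩
    exact ⟨x, y, hxy, rfl⟩

lemma A3_comp {D : Type*} (g : C → D) :
    A3 (fun x y => g (r x y)) = Multiset.map g '' A3 r := by
  ext m
  constructor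
  · rintro ⟨x, y, z, hxy, hyz, hxz, rfl⟩
    exact ⟨_, ⟨x, y, z, hxy, hyz, hxz, rfl⟩, by simp⟩
  · rintro ⟨_, ⟨x, y, z, hxy, hyz, hxz, rfl⟩, rfl⟩
    exact ⟨x, y, z, hxy, hyz, hxz, by simp⟩

lemma isFusion_comp {D : Type*} (g : C → D) : IsFusion r fun x y => g (r x y) :=
  fun _ _ _ _ _ _ h => congrArg g h

lemma exists_fusion_of_comp (hsym : ∀ x y, r x y = r y x) (g : C → C) {k : ℕ} (hk : 1 ≤ k)
    (hk' : k ≤ 2) (h2 : a2 (fun x y => g (r x y)) + k = a2 r)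
    (h3 : a3 (fun x y => g (r x y)) + k ≤ a3 r) :
    ∃ r₁ : X → X → C, (∀ x y, r₁ x y = r₁ y x) ∧ IsFusion r r₁ ∧
      a2 r₁ < a2 r ∧ a2 r - a2 r₁ ≤ 2 ∧ a3 r₁ + (a2 r - a2 r₁) ≤ a3 r :=
  ⟨_, fun x y => by rw [hsym], isFusion_comp r g, by omega, by omega, by omega⟩

end Coloring

section Counting

variable {A B : Type*}

lemma image_eq_sdiff_of_mapsTo {g : A → A} {s S : Set A} (hfix : ∀ a ∉ s, g a = a)
    (hmaps : Set.MapsTo g s (S \ s)) : g '' S = S \ s := by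
  ext a
  constructor
  · rintro ⟨b, hb, rfl⟩
    by_cases hbs : b ∈ s
    · exact hmaps hbs
    · rw [hfix b hbs]
      exact ⟨hb, hbs⟩
  · rintro ⟨ha, has⟩
    exact ⟨a, ha, hfix a has⟩

lemma ncard_image_add_ncard_le {g : A → B} {s T : Set A} (hT : T.Finite) (hsT : s ⊆ T)
    (hs : ∀ t ∈ s, ∃ t' ∈ T \ s, g t' = g t) : (g '' T).ncard + s.ncard ≤ T.ncard := by
  have himage : g '' T = g '' (T \ s) := by
    refine (Set.image_mono Set.sdiff_subset).antisymm' ?_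
    rintro _ ⟨t, ht, rfl⟩
    by_cases hts : t ∈ s
    · exact hs t hts
    · exact ⟨t, ⟨ht, hts⟩, rfl⟩
  calc (g '' T).ncard + s.ncard ≤ (T \ s).ncard + s.ncard := by
        rw [himage]
        gcongr
        exact Set.ncard_image_le (hT.subset Set.sdiff_subset)
    _ = T.ncard := Set.ncard_sdiff_add_ncard_of_subset hsT hT

end Counting

section Merging

variable {X C : Type*} [Finite X] (r : X → X → C) {g : C → C}

lemma a2_comp_add_ncard {s : Set C} (hs : s ⊆ colorIm r) (hfix : ∀ c ∉ s, g c = c)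
    (hmaps : Set.MapsTo g s (colorIm r \ s)) : a2 (fun x y => g (r x y)) + s.ncard = a2 r := by
  rw [a2, a2, colorIm_comp, image_eq_sdiff_of_mapsTo hfix hmaps]
  exact Set.ncard_sdiff_add_ncard_of_subset hs (colorIm_finite r)

lemma a3_comp_add_ncard_le {T : Set (Multiset C)} (hT : T ⊆ A3 r)
    (hmerge : ∀ t ∈ T, ∃ t' ∈ A3 r \ T, t'.map g = t.map g) :
    a3 (fun x y => g (r x y)) + T.ncard ≤ a3 r := by
  rw [a3, a3, A3_comp]
  exact ncard_image_add_ncard_le (A3_finite r) hT hmerge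

end Merging

lemma ne_triple_of_mem {C : Type*} {a d e f : C} {s : Multiset C} (ha : a ∈ s) (hd : a ≠ d)
    (he : a ≠ e) (hf : a ≠ f) : s ≠ {d, e, f} := by
  rintro rfl
  simp_all

section MatchingColoring

variable {X C : Type*} (r : X → X → C)

lemma eq_of_apply_eq_of_ncard_mdeg_two_eq_zero [Finite X] (hm : (Mdeg r 2).ncard = 0) :
    ∀ x y z, y ≠ x → z ≠ x → r x y = r x z → y = z := by
  intro x y z hy hz h
  by_contra hyz
  have hdeg : r x y ∈ Mdeg r 2 := by
    refine ⟨x, (Set.ncard_pair hyz).symm.le.trans (Set.ncard_le_ncard ?_)⟩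
    rintro _ (rfl | rfl)
    exacts [⟨hy, rfl⟩, ⟨hz, h.symm⟩]
  have hfin : (Mdeg r 2).Finite := by
    refine (colorIm_finite r).subset fun α ⟨w, hw⟩ => ?_
    obtain ⟨v, hvw, hv⟩ :=
      Set.nonempty_of_ncard_ne_zero (s := {y | y ≠ w ∧ r w y = α}) (by omega)
    exact ⟨w, v, Ne.symm hvw, hv⟩
  exact ((Set.ncard_pos hfin).2 ⟨_, hdeg⟩).ne' hm

lemma exists_distinct_pairs_apply_eq_of_a2_lt [Fintype X] (hsym : ∀ x y, r x y = r y x)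
    (ha : a2 r < Fintype.card X * (Fintype.card X - 1) / 2) :
    ∃ x y u v : X, x ≠ y ∧ u ≠ v ∧ s(x, y) ≠ s(u, v) ∧ r x y = r u v := by
  classical
  by_contra! hinj
  let F : Sym2 X → C := Sym2.lift ⟨r, hsym⟩
  have himage : colorIm r = F '' {e | ¬e.IsDiag} := by
    ext α
    constructor
    · rintro ⟨x, y, hxy, rfl⟩
      exact ⟨s(x, y), by simpa using hxy, rfl⟩
    · rintro ⟨e, he, rfl⟩
      induction e using Sym2.ind with
      | _ x y => exact ⟨x, y, by simpa using he, rfl⟩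
  have hinjOn : Set.InjOn F {e | ¬e.IsDiag} := by
    intro e he e' he' hF
    induction e using Sym2.ind
    induction e' using Sym2.ind
    by_contra hne
    exact hinj _ _ _ _ (by simpa using he) (by simpa using he') hne hF
  have hcard : a2 r = (Fintype.card X).choose 2 := by
    rw [a2, himage, hinjOn.ncard_image, ← Nat.card_coe_set_eq, Set.coe_ofPred,
      Nat.card_eq_fintype_card, Sym2.card_subtype_not_diag]
  rw [hcard, Nat.choose_two_right] at ha
  exact lt_irrefl _ ha

variable {r} (hsym : ∀ x y, r x y = r y x)
  (hmatch : ∀ x y z, y ≠ x → z ≠ x → r x y = r x z → y = z)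
include hsym hmatch

lemma pairs_disjoint_of_apply_eq {x y u v : X} (hxy : x ≠ y) (huv : u ≠ v)
    (hne : s(x, y) ≠ s(u, v)) (h : r x y = r u v) :
    x ≠ u ∧ x ≠ v ∧ y ≠ u ∧ y ≠ v := by
  simp only [ne_eq, Sym2.eq_iff, not_or, not_and] at hne
  grind

lemma exists_merge_one_color [Finite X] {x y u v : X} (hxy : x ≠ y) (hxu : x ≠ u)
    (hyu : y ≠ u) (hyv : y ≠ v) (huv : u ≠ v) (hα : r x y = r u v) (hβ : r x u ≠ r y v) :
    ∃ g : C → C,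
      a2 (fun a b => g (r a b)) + 1 = a2 r ∧ a3 (fun a b => g (r a b)) + 1 ≤ a3 r := by
  classical
  set g := Function.update id (r y v) (r x u)
  have hmaps : Set.MapsTo g {r y v} (colorIm r \ {r y v}) :=
    Set.mapsTo_singleton.2 <| by
      simpa only [g, Function.update_self] using ⟨⟨x, u, hxu, rfl⟩, hβ⟩
  have hmerge : ∀ t ∈ ({{r y v, r v u, r y u}} : Set (Multiset C)),
      ∃ t' ∈ A3 r \ {{r y v, r v u, r y u}}, t'.map g = t.map g := by
    rintro _ rfl
    refine ⟨{r u x, r x y, r u y}, ⟨⟨u, x, y, hxu.symm, hxy, hyu.symm, rfl⟩, ?_⟩, ?_⟩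
    · exact ne_triple_of_mem (a := r u x) (by simp) (by grind) (by grind) (by grind)
    · simp only [g, Multiset.insert_eq_cons, Multiset.map_cons, Multiset.map_singleton,
        Function.update_apply, id]
      grind
  refine ⟨g, ?_, ?_⟩
  · simpa using a2_comp_add_ncard r (Set.singleton_subset_iff.2 ⟨y, v, hyv, rfl⟩)
      (fun c hc => Function.update_of_ne hc _ _) hmaps
  · simpa using a3_comp_add_ncard_le r
      (Set.singleton_subset_iff.2 ⟨y, v, u, hyv, huv.symm, hyu, rfl⟩) hmerge

lemma exists_merge_two_colors [Finite X] {x y u v w : X} (hxy : x ≠ y) (hxu : x ≠ u)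
    (hyu : y ≠ u) (hyv : y ≠ v) (huv : u ≠ v) (hwx : w ≠ x) (hwy : w ≠ y) (hwu : w ≠ u)
    (hwv : w ≠ v) (hα : r x y = r u v) (hβ : r x u = r y v) :
    ∃ g : C → C,
      a2 (fun a b => g (r a b)) + 2 = a2 r ∧ a3 (fun a b => g (r a b)) + 2 ≤ a3 r := by
  classical
  set g := Function.update (Function.update id (r w v) (r w x)) (r w u) (r w y)
  have hwuv : r w u ≠ r w v := fun h => huv (hmatch w u v hwu.symm hwv.symm h)
  have hmaps : Set.MapsTo g {r w v, r w u} (colorIm r \ {r w v, r w u}) := by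
    rintro c (rfl | rfl)
    · simp only [g, Function.update_of_ne hwuv.symm, Function.update_self]
      exact ⟨⟨w, x, hwx, rfl⟩, by grind⟩
    · simp only [g, Function.update_self]
      exact ⟨⟨w, y, hwy, rfl⟩, by grind⟩
  set T : Set (Multiset C) := {{r w v, r v u, r w u}, {r w v, r v y, r w y}}
  have hT : T.ncard = 2 :=
    Set.ncard_pair (ne_triple_of_mem (a := r v u) (by simp) (by grind) (by grind) (by grind))
  have hfresh : ∀ t : Multiset C, r w x ∈ t → t ∉ T := by
    intro t ht
    simp only [T, Set.mem_insert_iff, Set.mem_singleton_iff, not_or]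
    exact ⟨ne_triple_of_mem ht (by grind) (by grind) (by grind),
      ne_triple_of_mem ht (by grind) (by grind) (by grind)⟩
  have hmerge : ∀ t ∈ T, ∃ t' ∈ A3 r \ T, t'.map g = t.map g := by
    simp only [T, Set.mem_insert_iff, Set.mem_singleton_iff, forall_eq_or_imp, forall_eq]
    refine ⟨⟨{r w x, r x y, r w y},
        ⟨⟨w, x, y, hwx, hxy, hwy, rfl⟩, hfresh _ (by simp)⟩, ?_⟩,
      ⟨{r w x, r x u, r w u},
        ⟨⟨w, x, u, hwx, hxu, hwu, rfl⟩, hfresh _ (by simp)⟩, ?_⟩⟩ <;>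
    · simp only [g, Multiset.insert_eq_cons, Multiset.map_cons, Multiset.map_singleton,
        Function.update_apply, id]
      grind
  refine ⟨g, ?_, ?_⟩
  · simpa [Set.ncard_pair hwuv.symm] using a2_comp_add_ncard r
      (Set.pair_subset ⟨w, v, hwv, rfl⟩ ⟨w, u, hwu, rfl⟩) (fun c hc => by simp_all [g])
      hmaps
  · exact hT ▸ a3_comp_add_ncard_le (T := T) r
      (Set.pair_subset ⟨w, v, u, hwv, huv.symm, hwu, rfl⟩
        ⟨w, v, y, hwv, hyv.symm, hwy, rfl⟩) hmerge

end MatchingColoring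

/-- Lemma `lem:a2`. -/
theorem lem_a2 {X C : Type*} [Fintype X] (r : X → X → C)
    (hsym : ∀ x y, r x y = r y x)
    (hX : 5 ≤ Fintype.card X)
    (ha : a2 r < Fintype.card X * (Fintype.card X - 1) / 2)
    (hm : (Mdeg r 2).ncard = 0) :
    ∃ r₁ : X → X → C, (∀ x y, r₁ x y = r₁ y x) ∧ IsFusion r r₁ ∧
      a2 r₁ < a2 r ∧ a2 r - a2 r₁ ≤ 2 ∧ a3 r₁ + (a2 r - a2 r₁) ≤ a3 r := by
  classical
  have hmatch := eq_of_apply_eq_of_ncard_mdeg_two_eq_zero r hm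
  obtain ⟨x, y, u, v, hxy, huv, hne, hα⟩ := exists_distinct_pairs_apply_eq_of_a2_lt r hsym ha
  obtain ⟨hxu, -, hyu, hyv⟩ := pairs_disjoint_of_apply_eq hsym hmatch hxy huv hne hα
  by_cases hβ : r x u = r y v
  · obtain ⟨w, -, hw⟩ := Finset.exists_mem_notMem_of_card_lt_card (t := Finset.univ)
      ((Finset.card_le_four (a := x) (b := y) (c := u) (d := v)).trans_lt
        (by rw [Finset.card_univ]; omega))
    simp only [Finset.mem_insert, Finset.mem_singleton, not_or] at hw
    obtain ⟨hwx, hwy, hwu, hwv⟩ := hw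
    obtain ⟨g, h2, h3⟩ :=
      exists_merge_two_colors hsym hmatch hxy hxu hyu hyv huv hwx hwy hwu hwv hα hβ
    exact exists_fusion_of_comp r hsym g (by norm_num) le_rfl h2 h3
  · obtain ⟨g, h2, h3⟩ := exists_merge_one_color hsym hmatch hxy hxu hyu hyv huv hα hβ
    exact exists_fusion_of_comp r hsym g le_rfl (by norm_num) h2 h3
end

section
/- Let X be a 6-element set partitioned into sets Y and Z with |Y| = 4 and |Z| = 2, and let r be the coloring of the 2-subsets of X with four distinct colors α,β,γ,δ defined by: r({u,v}) = α if u ∈ Y and v ∈ Z; E_γ := r^{-1}(γ) is a perfect matching on Y (two disjoint edges covering Y); r({u,v}) = β for the remaining 2-subsets of Y; and r({u,v}) = δ for the unique 2-subset of Z. Then every subset W of X with |W| ≥ 5 and Z ⊆ W satisfies A_3(r_W) = {ααβ, ααγ, ββγ, ααδ}. -/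
private lemma tswap12 {C : Type*} (a b c : C) : ({a, b, c} : Multiset C) = {b, a, c} :=
  Multiset.cons_swap a b {c}

private lemma tswap23 {C : Type*} (a b c : C) : ({a, b, c} : Multiset C) = {a, c, b} := by
  show a ::ₘ b ::ₘ c ::ₘ 0 = a ::ₘ c ::ₘ b ::ₘ 0
  rw [Multiset.cons_swap b c]

private lemma exists3_of_ncard {X : Type*} [Fintype X] {s : Set X} (h : 3 ≤ s.ncard) :
    ∃ a b c : X, a ∈ s ∧ b ∈ s ∧ c ∈ s ∧ a ≠ b ∧ a ≠ c ∧ b ≠ c := by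
  classical
  have hfin : s.Finite := Set.toFinite s
  rw [Set.ncard_eq_toFinset_card s hfin] at h
  obtain ⟨t, hts, htc⟩ := Finset.exists_subset_card_eq h
  obtain ⟨a, b, c, hab, hac, hbc, ht⟩ := Finset.card_eq_three.mp htc
  have ha : a ∈ s := hfin.mem_toFinset.mp (hts (ht ▸ by simp))
  have hb : b ∈ s := hfin.mem_toFinset.mp (hts (ht ▸ by simp))
  have hc : c ∈ s := hfin.mem_toFinset.mp (hts (ht ▸ by simp))
  exact ⟨a, b, c, ha, hb, hc, hab, hac, hbc⟩

/-- Example after Lemma 3.3, second one. -/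
theorem example_4_plus_2 {X C : Type*} [Fintype X] (r : X → X → C)
    (hsym : ∀ x y, r x y = r y x)
    (Y Z : Set X) (hdisj : Disjoint Y Z) (hunion : Y ∪ Z = Set.univ)
    (hYcard : Y.ncard = 4) (hZcard : Z.ncard = 2)
    (α β γ δ : C)
    (hdist : α ≠ β ∧ α ≠ γ ∧ α ≠ δ ∧ β ≠ γ ∧ β ≠ δ ∧ γ ≠ δ)
    (hα : ∀ u v : X, u ∈ Y → v ∈ Z → r u v = α)
    (hγY : ∀ u v : X, u ≠ v → r u v = γ → u ∈ Y ∧ v ∈ Y)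
    (hγmatch : IsMatchingOn r {γ})
    (hγperf : ∀ u ∈ Y, ∃ v ∈ Y, v ≠ u ∧ r u v = γ)
    (hβ : ∀ u v : X, u ≠ v → u ∈ Y → v ∈ Y → r u v ≠ γ → r u v = β)
    (hδ : ∀ u v : X, u ≠ v → u ∈ Z → v ∈ Z → r u v = δ) :
    ∀ W : Set X, 5 ≤ W.ncard → Z ⊆ W →
      A3on r W = {({α, α, β} : Multiset C), ({α, α, γ} : Multiset C),
        ({β, β, γ} : Multiset C), ({α, α, δ} : Multiset C)} := by
  
  classical
  obtain ⟨hαβ, hαγ, hαδ, hβγ, hβδ, hγδ⟩ := hdist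
  have hmem : ∀ x : X, x ∈ Y ∨ x ∈ Z := fun x => by
    have : x ∈ Y ∪ Z := hunion ▸ Set.mem_univ x
    exact this
  have hYZ : ∀ x : X, x ∈ Y → x ∈ Z → False := fun x hx hz =>
    Set.disjoint_left.mp hdisj hx hz
  -- no three distinct elements of Z
  have hZ3 : ∀ x y z : X, x ∈ Z → y ∈ Z → z ∈ Z → x ≠ y → x ≠ z → y ≠ z → False := by
    intro x y z hx hy hz hxy hxz hyz
    have h3 : ({x, y, z} : Set X).ncard = 3 :=
      Set.ncard_eq_three.mpr ⟨x, y, z, hxy, hxz, hyz, rfl⟩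
    have hsub : ({x, y, z} : Set X) ⊆ Z := by
      intro w hw
      rcases hw with rfl | rfl | rfl <;> assumption
    have := Set.ncard_le_ncard hsub (Set.toFinite Z)
    omega
  -- any 3 distinct elements of Y contain a γ-edge
  have tri : ∀ a b c : X, a ∈ Y → b ∈ Y → c ∈ Y → a ≠ b → a ≠ c → b ≠ c →
      r a b = γ ∨ r a c = γ ∨ r b c = γ := by
    intro a b c ha hb hc hab hac hbc
    by_contra h
    push_neg at h
    obtain ⟨h1, h2, h3⟩ := h
    obtain ⟨p, hpY, hpa, hpγ⟩ := hγperf a ha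
    obtain ⟨q, hqY, hqb, hqγ⟩ := hγperf b hb
    have hpb : p ≠ b := fun e => h1 (e ▸ hpγ)
    have hpc : p ≠ c := fun e => h2 (e ▸ hpγ)
    have hqa : q ≠ a := fun e => h1 (by rw [hsym]; exact e ▸ hqγ)
    have hqc : q ≠ c := fun e => h3 (e ▸ hqγ)
    have hqp : q ≠ p := by
      intro e
      subst e
      have h1' : r q a = γ := by rw [hsym]; exact hpγ
      have h2' : r q b = γ := by rw [hsym]; exact hqγ
      exact hab (hγmatch q a b hqa.symm hqb.symm (by simp [h1']) (by simp [h2']))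
    have hsub : ({a, b, c, p, q} : Set X) ⊆ Y := by
      intro w hw
      rcases hw with rfl | rfl | rfl | rfl | rfl <;> assumption
    have h5 : ({a, b, c, p, q} : Set X).ncard = 5 := by
      rw [Set.ncard_insert_of_notMem (by simp [hab, hac, hpa.symm, hqa.symm]),
        Set.ncard_insert_of_notMem (by simp [hbc, hpb.symm, hqb.symm]),
        Set.ncard_insert_of_notMem (by simp [hpc.symm, hqc.symm]),
        Set.ncard_pair hqp.symm]
    have := Set.ncard_le_ncard hsub (Set.toFinite Y)
    omega
  -- at most one γ-edge in a triangle
  have onlyone : ∀ x y z : X, x ≠ y → y ≠ z → x ≠ z → r x y = γ →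
      r y z ≠ γ ∧ r x z ≠ γ := by
    intro x y z hxy hyz hxz hγxy
    constructor
    · intro h
      have h1 : r y x = γ := by rw [hsym]; exact hγxy
      exact hxz (hγmatch y x z hxy hyz.symm (by simp [h1]) (by simp [h]))
    · intro h
      exact hyz (hγmatch x y z hxy.symm hxz.symm (by simp [hγxy]) (by simp [h]))
  have pairY : ∀ u v : X, u ≠ v → u ∈ Y → v ∈ Y → r u v = β ∨ r u v = γ := by
    intro u v h hu hv
    by_cases hg : r u v = γ
    · exact Or.inr hg
    · exact Or.inl (hβ u v h hu hv hg)
  intro W hW hZW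
  apply Set.Subset.antisymm
  · -- forward inclusion
    rintro m ⟨x, hx, y, hy, z, hz, hxy, hyz, hxz, rfl⟩
    simp only [Set.mem_insert_iff, Set.mem_singleton_iff]
    rcases hmem x with hxY | hxZ <;> rcases hmem y with hyY | hyZ <;>
      rcases hmem z with hzY | hzZ
    · -- YYY
      rcases tri x y z hxY hyY hzY hxy hxz hyz with hg | hg | hg
      · obtain ⟨h1, h2⟩ := onlyone x y z hxy hyz hxz hg
        rw [hg, hβ y z hyz hyY hzY h1, hβ x z hxz hxY hzY h2]
        exact Or.inr (Or.inr (Or.inl ((tswap12 γ β β).trans (tswap23 β γ β))))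
      · obtain ⟨h1, h2⟩ := onlyone x z y hxz hyz.symm hxy hg
        rw [hg, hβ x y hxy hxY hyY h2,
          hβ y z hyz hyY hzY (fun e => h1 (by rw [hsym]; exact e))]
        exact Or.inr (Or.inr (Or.inl rfl))
      · obtain ⟨h1, h2⟩ := onlyone y z x hyz hxz.symm hxy.symm hg
        rw [hg, hβ x y hxy hxY hyY (fun e => h2 (by rw [hsym]; exact e)),
          hβ x z hxz hxY hzY (fun e => h1 (by rw [hsym]; exact e))]
        exact Or.inr (Or.inr (Or.inl (tswap23 β γ β)))
    · -- YYZ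
      rw [hα y z hyY hzZ, hα x z hxY hzZ]
      rcases pairY x y hxy hxY hyY with hb | hb <;> rw [hb]
      · exact Or.inl ((tswap12 β α α).trans (tswap23 α β α))
      · exact Or.inr (Or.inl ((tswap12 γ α α).trans (tswap23 α γ α)))
    · -- YZY
      have h1 : r y z = α := by rw [hsym]; exact hα z y hzY hyZ
      rw [hα x y hxY hyZ, h1]
      rcases pairY x z hxz hxY hzY with hb | hb <;> rw [hb]
      · exact Or.inl rfl
      · exact Or.inr (Or.inl rfl)
    · -- YZZ
      rw [hα x y hxY hyZ, hα x z hxY hzZ, hδ y z hyz hyZ hzZ]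
      exact Or.inr (Or.inr (Or.inr (tswap23 α δ α)))
    · -- ZYY
      have h1 : r x y = α := by rw [hsym]; exact hα y x hyY hxZ
      have h2 : r x z = α := by rw [hsym]; exact hα z x hzY hxZ
      rw [h1, h2]
      rcases pairY y z hyz hyY hzY with hb | hb <;> rw [hb]
      · exact Or.inl (tswap23 α β α)
      · exact Or.inr (Or.inl (tswap23 α γ α))
    · -- ZYZ
      have h1 : r x y = α := by rw [hsym]; exact hα y x hyY hxZ
      rw [h1, hα y z hyY hzZ, hδ x z hxz hxZ hzZ]
      exact Or.inr (Or.inr (Or.inr rfl))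
    · -- ZZY
      have h1 : r y z = α := by rw [hsym]; exact hα z y hzY hyZ
      have h2 : r x z = α := by rw [hsym]; exact hα z x hzY hxZ
      rw [h1, h2, hδ x y hxy hxZ hyZ]
      exact Or.inr (Or.inr (Or.inr ((tswap12 δ α α).trans (tswap23 α δ α))))
    · exact (hZ3 x y z hxZ hyZ hzZ hxy hxz hyz).elim
  · -- reverse inclusion: find witnesses
    obtain ⟨z1, z2, hz12, hZeq⟩ := Set.ncard_eq_two.mp hZcard
    have hz1Z : z1 ∈ Z := hZeq ▸ Set.mem_insert _ _
    have hz2Z : z2 ∈ Z := hZeq ▸ Set.mem_insert_of_mem _ rfl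
    have hz1W : z1 ∈ W := hZW hz1Z
    have hz2W : z2 ∈ W := hZW hz2Z
    -- W ∩ Y has at least 3 elements
    have hWYcard : 3 ≤ (W ∩ Y).ncard := by
      have hWsub : W ⊆ (W ∩ Y) ∪ Z := by
        intro x hx
        rcases hmem x with hY | hZ
        · exact Or.inl ⟨hx, hY⟩
        · exact Or.inr hZ
      have h1 := Set.ncard_le_ncard hWsub (Set.toFinite _)
      have h2 := Set.ncard_union_le (W ∩ Y) Z
      omega
    obtain ⟨a0, b0, c0, ha0, hb0, hc0, hab0, hac0, hbc0⟩ := exists3_of_ncard hWYcard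
    have hwit : ∃ a b c : X, (a ∈ W ∧ a ∈ Y) ∧ (b ∈ W ∧ b ∈ Y) ∧ (c ∈ W ∧ c ∈ Y) ∧
        a ≠ b ∧ a ≠ c ∧ b ≠ c ∧ r a b = γ := by
      rcases tri a0 b0 c0 ha0.2 hb0.2 hc0.2 hab0 hac0 hbc0 with h | h | h
      · exact ⟨a0, b0, c0, ha0, hb0, hc0, hab0, hac0, hbc0, h⟩
      · exact ⟨a0, c0, b0, ha0, hc0, hb0, hac0, hab0, hbc0.symm, h⟩
      · exact ⟨b0, c0, a0, hb0, hc0, ha0, hbc0, hab0.symm, hac0.symm, h⟩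
    obtain ⟨a, b, c, ⟨haW, haY⟩, ⟨hbW, hbY⟩, ⟨hcW, hcY⟩, hab, hac, hbc, habγ⟩ := hwit
    have hacβ : r a c = β := by
      apply hβ a c hac haY hcY
      intro h
      exact hbc (hγmatch a b c hab.symm hac.symm (by simp [habγ]) (by simp [h]))
    have hbcβ : r b c = β := by
      apply hβ b c hbc hbY hcY
      intro h
      have h1 : r b a = γ := by rw [hsym]; exact habγ
      exact hac (hγmatch b a c hab hbc.symm (by simp [h1]) (by simp [h]))
    have haz1 : a ≠ z1 := fun e => hYZ a haY (e ▸ hz1Z)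
    have haz2 : a ≠ z2 := fun e => hYZ a haY (e ▸ hz2Z)
    have hbz1 : b ≠ z1 := fun e => hYZ b hbY (e ▸ hz1Z)
    have hcz1 : c ≠ z1 := fun e => hYZ c hcY (e ▸ hz1Z)
    have haz1α : r a z1 = α := hα a z1 haY hz1Z
    have haz2α : r a z2 = α := hα a z2 haY hz2Z
    have hz1cα : r z1 c = α := by rw [hsym]; exact hα c z1 hcY hz1Z
    have hz1bα : r z1 b = α := by rw [hsym]; exact hα b z1 hbY hz1Z
    have hz1aα : r z1 a = α := by rw [hsym]; exact haz1α
    have hcbβ : r c b = β := by rw [hsym]; exact hbcβ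
    have hz12δ : r z1 z2 = δ := hδ z1 z2 hz12 hz1Z hz2Z
    rintro m (rfl | rfl | rfl | rfl)
    · exact ⟨a, haW, z1, hz1W, c, hcW, haz1, hcz1.symm, hac,
        by rw [haz1α, hz1cα, hacβ]⟩
    · exact ⟨a, haW, z1, hz1W, b, hbW, haz1, hbz1.symm, hab,
        by rw [haz1α, hz1bα, habγ]⟩
    · exact ⟨a, haW, c, hcW, b, hbW, hac, hbc.symm, hab,
        by rw [hacβ, hcbβ, habγ]⟩
    · exact ⟨z1, hz1W, a, haW, z2, hz2W, haz1.symm, haz2, hz12,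
        by rw [hz1aα, haz2α, hz12δ]⟩
end
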